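/- Greedy guarantee from bounded curvature and submodularity ratio: Let f be a nonnegative monotone nondecreasing set function on subsets of {1,...,N} with curvature ξ ∈ (0,1] and submodularity ratio γ ∈ (0,1]. Then the greedy algorithm selecting κ elements, each maximizing the marginal gain, returns a set S_G with f(S_G) ≥ (1/ξ)(1 − e^{−ξγ}) · max_{|S|≤κ} f(S). -/

import Mathlib

/-!
Write `δᵢ = f (g (i+1)) - f (g i)` for the greedy gains, `Aᵢ` for the sum of the gains of the
steps before `i` that pick an element outside `S`, `Bᵢ = f (g i) - Aᵢ`, and
`Φᵢ = f S + (1 - ξ) Aᵢ - f (g i)`. Curvature gives `Φᵢ ≤ f (S ∪ g i) - f (g i)`, so the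
submodularity ratio and the greedy choice give `γ Φᵢ ≤ |S \ g i| δᵢ`. A step outside `S` lowers `Φ`
by `ξ δᵢ`; a step inside `S` lowers `Φ` by `δᵢ`, raises `B` by `δᵢ` and shrinks `|S \ g i|`.
With `V n d = max (1 - ξ) ((1 - ξγ/d)ⁿ)` the potential `(1 - ξ) Bᵢ + Φᵢ V (κ - i) |S \ g i|` is
then nonincreasing, and `V κ |S| ≤ e^{-ξγ}` because `|S| ≤ κ`.
-/

open Finset Real

theorem mix_le_one_sub_mul_pow_succ {ξ t t' : ℝ} (hξ0 : 0 ≤ ξ) (hξ1 : ξ ≤ 1) (ht0 : 0 ≤ t)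
    (htt' : t ≤ t') (hξt' : ξ * t' ≤ 1) (hq : t ^ 2 ≤ (1 - t) * (t' - t)) (n : ℕ)
    (hn : 1 - ξ ≤ (1 - ξ * t') ^ n) :
    (1 - ξ) * t + (1 - t) * (1 - ξ * t') ^ n ≤ (1 - ξ * t) ^ (n + 1) := by
  induction n with
  | zero => simp only [pow_zero, zero_add, pow_one]; linarith
  | succ n ih =>
    have hn' : 1 - ξ ≤ (1 - ξ * t') ^ n :=
      hn.trans (pow_le_pow_of_le_one (by linarith) (by nlinarith) n.le_succ)
    have hc : t ^ 2 * (1 - ξ) ≤ (1 - t) * (t' - t) * (1 - ξ * t') ^ n :=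
      (mul_le_mul_of_nonneg_right hq (by linarith)).trans
        (mul_le_mul_of_nonneg_left hn' ((sq_nonneg t).trans hq))
    calc (1 - ξ) * t + (1 - t) * (1 - ξ * t') ^ (n + 1)
        = (1 - ξ * t) * ((1 - ξ) * t + (1 - t) * (1 - ξ * t') ^ n)
          - ξ * ((1 - t) * (t' - t) * (1 - ξ * t') ^ n - t ^ 2 * (1 - ξ)) := by ring
      _ ≤ (1 - ξ * t) * ((1 - ξ) * t + (1 - t) * (1 - ξ * t') ^ n) :=
        sub_le_self _ (mul_nonneg hξ0 (sub_nonneg.2 hc))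
      _ ≤ (1 - ξ * t) * (1 - ξ * t) ^ (n + 1) :=
        mul_le_mul_of_nonneg_left (ih hn') (by nlinarith)
      _ = (1 - ξ * t) ^ (n + 1 + 1) := by ring

noncomputable def greedyFactor (ξ γ : ℝ) (n d : ℕ) : ℝ := max (1 - ξ) ((1 - ξ * (γ / d)) ^ n)

section greedyFactor

variable {ξ γ : ℝ} {n d : ℕ}

theorem greedyFactor_zero (hξ : 0 ≤ ξ) : greedyFactor ξ γ 0 d = 1 := by
  simp [greedyFactor, hξ]

theorem greedyFactor_le_exp (hξ0 : 0 ≤ ξ) (hξ1 : ξ ≤ 1) (hγ0 : 0 ≤ γ) (hγ1 : γ ≤ 1)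
    (hd : 1 ≤ d) (hdn : d ≤ n) : greedyFactor ξ γ n d ≤ exp (-(ξ * γ)) := by
  have hd' : (1 : ℝ) ≤ d := by exact_mod_cast hd
  have hξγ : ξ * γ ≤ 1 := by nlinarith
  refine max_le (by linarith [add_one_le_exp (-(ξ * γ)), mul_le_of_le_one_right hξ0 hγ1]) ?_
  rw [← mul_div_assoc]
  calc (1 - ξ * γ / d) ^ n ≤ (1 - ξ * γ / d) ^ d :=
        pow_le_pow_of_le_one (sub_nonneg.2 ((div_le_one (by linarith)).2 (by linarith)))
          (sub_le_self _ (by positivity)) hdn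
    _ ≤ exp (-(ξ * γ)) := one_sub_div_pow_le_exp_neg (by linarith)

theorem greedyFactor_step_out {Φ δ : ℝ} (hξ0 : 0 ≤ ξ) (hξ1 : ξ ≤ 1) (hd : 1 ≤ d)
    (hΦ : 0 ≤ Φ) (hδ0 : 0 ≤ δ) (hδ : γ * Φ ≤ d * δ) :
    (Φ - ξ * δ) * greedyFactor ξ γ n d ≤ Φ * greedyFactor ξ γ (n + 1) d := by
  have hd' : (0 : ℝ) < d := by exact_mod_cast hd
  have hδ' : γ / d * Φ ≤ δ := by rw [div_mul_eq_mul_div, div_le_iff₀ hd']; linarith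
  rcases le_total ((1 - ξ * (γ / d)) ^ n) (1 - ξ) with h | h
  · rw [greedyFactor, max_eq_left h]
    calc (Φ - ξ * δ) * (1 - ξ) ≤ Φ * (1 - ξ) :=
          mul_le_mul_of_nonneg_right (by nlinarith) (by linarith)
      _ ≤ Φ * greedyFactor ξ γ (n + 1) d := mul_le_mul_of_nonneg_left (le_max_left _ _) hΦ
  · rw [greedyFactor, max_eq_right h]
    calc (Φ - ξ * δ) * (1 - ξ * (γ / d)) ^ n
        ≤ (Φ - ξ * (γ / d * Φ)) * (1 - ξ * (γ / d)) ^ n :=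
          mul_le_mul_of_nonneg_right (by nlinarith) ((sub_nonneg.2 hξ1).trans h)
      _ = Φ * (1 - ξ * (γ / d)) ^ (n + 1) := by ring
      _ ≤ Φ * greedyFactor ξ γ (n + 1) d := mul_le_mul_of_nonneg_left (le_max_right _ _) hΦ

theorem greedyFactor_step_in {Φ δ : ℝ} (hξ0 : 0 ≤ ξ) (hξ1 : ξ ≤ 1) (hγ0 : 0 ≤ γ) (hγ1 : γ ≤ 1)
    (hd : 1 ≤ d) (hΦ : 0 ≤ Φ) (hδ : γ * Φ ≤ (d + 1) * δ) :
    (1 - ξ) * δ + (Φ - δ) * greedyFactor ξ γ n d ≤ Φ * greedyFactor ξ γ (n + 1) (d + 1) := by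
  have hd' : (1 : ℝ) ≤ d := by exact_mod_cast hd
  set t := γ / (d + 1) with ht
  have hδ' : t * Φ ≤ δ := by rw [ht, div_mul_eq_mul_div, div_le_iff₀ (by linarith)]; linarith
  have hV : Φ * (1 - ξ * t) ^ (n + 1) ≤ Φ * greedyFactor ξ γ (n + 1) (d + 1) :=
    mul_le_mul_of_nonneg_left (by rw [greedyFactor]; push_cast; exact le_max_right _ _) hΦ
  rcases le_total ((1 - ξ * (γ / d)) ^ n) (1 - ξ) with h | h
  · rw [greedyFactor, max_eq_left h]
    calc (1 - ξ) * δ + (Φ - δ) * (1 - ξ) = Φ * (1 - ξ) := by ring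
      _ ≤ Φ * greedyFactor ξ γ (n + 1) (d + 1) := mul_le_mul_of_nonneg_left (le_max_left _ _) hΦ
  · rw [greedyFactor, max_eq_right h]
    have hq : (1 - t) * (γ / d - t) - t ^ 2 = γ * (1 - γ) / (d * (d + 1)) := by
      rw [ht]; field_simp; ring
    have hmix := mix_le_one_sub_mul_pow_succ (t := t) (t' := γ / d) hξ0 hξ1 (by positivity)
      (div_le_div_of_nonneg_left hγ0 (by linarith) (by linarith))
      (mul_le_one₀ hξ1 (by positivity) (div_le_one_of_le₀ (hγ1.trans hd') (by positivity)))
      (by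
        rw [← sub_nonneg, hq]; exact div_nonneg (mul_nonneg hγ0 (sub_nonneg.2 hγ1)) (by positivity))
      n h
    calc (1 - ξ) * δ + (Φ - δ) * (1 - ξ * (γ / d)) ^ n
        = Φ * (1 - ξ * (γ / d)) ^ n - δ * ((1 - ξ * (γ / d)) ^ n - (1 - ξ)) := by ring
      _ ≤ Φ * (1 - ξ * (γ / d)) ^ n - t * Φ * ((1 - ξ * (γ / d)) ^ n - (1 - ξ)) := by
        gcongr
      _ = Φ * ((1 - ξ) * t + (1 - t) * (1 - ξ * (γ / d)) ^ n) := by ring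
      _ ≤ Φ * (1 - ξ * t) ^ (n + 1) := mul_le_mul_of_nonneg_left hmix hΦ
      _ ≤ _ := hV

end greedyFactor

theorem potential_le_greedyFactor {ξ γ : ℝ} (hξ0 : 0 ≤ ξ) (hξ1 : ξ ≤ 1) (hγ0 : 0 ≤ γ)
    (hγ1 : γ ≤ 1) {κ : ℕ} {Φ B : ℕ → ℝ} {D : ℕ → ℕ} (hΦ : ∀ i ≤ κ, 0 ≤ Φ i)
    (hD : ∀ i ≤ κ, 1 ≤ D i)
    (hstep : ∀ i < κ, ∃ δ, 0 ≤ δ ∧ γ * Φ i ≤ D i * δ ∧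
      ((Φ (i + 1) = Φ i - δ ∧ B (i + 1) = B i + δ ∧ D i = D (i + 1) + 1) ∨
        (Φ (i + 1) = Φ i - ξ * δ ∧ B (i + 1) = B i ∧ D (i + 1) = D i))) :
    Φ κ + (1 - ξ) * B κ ≤ (1 - ξ) * B 0 + Φ 0 * greedyFactor ξ γ κ (D 0) := by
  set W : ℕ → ℝ := fun i ↦ (1 - ξ) * B i + Φ i * greedyFactor ξ γ (κ - i) (D i) with hW
  have hW_succ : ∀ i < κ, W (i + 1) ≤ W i := by
    intro i hi
    have hκi : κ - i = κ - (i + 1) + 1 := by omega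
    obtain ⟨δ, hδ0, hδ, ⟨hΦ', hB', hD'⟩ | ⟨hΦ', hB', hD'⟩⟩ := hstep i hi
    · rw [hD'] at hδ
      push_cast at hδ
      have := greedyFactor_step_in (n := κ - (i + 1)) hξ0 hξ1 hγ0 hγ1 (hD (i + 1) hi)
        (hΦ i hi.le) hδ
      simp only [hW, hΦ', hB', hκi, hD']
      linarith
    · have := greedyFactor_step_out (n := κ - (i + 1)) hξ0 hξ1 (hD i hi.le) (hΦ i hi.le) hδ0 hδ
      simp only [hW, hΦ', hB', hκi, hD']
      linarith
  have hW_anti : AntitoneOn W (Set.Iic κ) :=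
    antitoneOn_of_succ_le Set.ordConnected_Iic fun i _ _ hi ↦ hW_succ i hi
  simpa [hW, greedyFactor_zero hξ0, add_comm] using
    hW_anti (Set.mem_Iic.2 (Nat.zero_le κ)) (Set.mem_Iic.2 le_rfl) (Nat.zero_le κ)

section SetFunction

variable {α : Type*} [DecidableEq α] {f : Finset α → ℝ} {ξ γ : ℝ}

def IsGreedyStep (f : Finset α → ℝ) (s s' : Finset α) : Prop :=
  ∃ k, k ∉ s ∧ s' = insert k s ∧ ∀ k', k' ∉ s → f (insert k' s) ≤ f (insert k s)

theorem IsGreedyStep.subset {s s' : Finset α} (h : IsGreedyStep f s s') : s ⊆ s' := by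
  obtain ⟨k, -, rfl, -⟩ := h
  exact subset_insert k s

theorem IsGreedyStep.mul_le_card_mul {S s s' : Finset α} (h : IsGreedyStep f s s')
    (hratio : γ * (f (s ∪ S) - f s) ≤ ∑ k ∈ S \ s, (f (insert k s) - f s)) :
    γ * (f (S ∪ s) - f s) ≤ #(S \ s) * (f s' - f s) := by
  obtain ⟨k, -, rfl, hmax⟩ := h
  rw [union_comm, ← nsmul_eq_mul]
  exact hratio.trans (sum_le_card_nsmul _ _ _ fun k' hk' ↦
    sub_le_sub_right (hmax k' (mem_sdiff.1 hk').2) _)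

variable {S : Finset α} {g : ℕ → Finset α} {κ : ℕ}

theorem monotoneOn_of_isGreedyStep (hstep : ∀ t < κ, IsGreedyStep f (g t) (g (t + 1))) :
    MonotoneOn g (Set.Iic κ) :=
  monotoneOn_of_le_succ Set.ordConnected_Iic fun t _ _ ht ↦ (hstep t ht).subset

-- The `j`-th step picks an element of `S` exactly when `g (j + 1) ⊆ S ∪ g j`.
variable (f S g) in
def gainOutside (i : ℕ) : ℝ :=
  ∑ j ∈ range i, if g (j + 1) ⊆ S ∪ g j then 0 else f (g (j + 1)) - f (g j)

@[simp]
theorem gainOutside_zero : gainOutside f S g 0 = 0 := by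
  simp [gainOutside]

theorem gainOutside_succ_of_mem {j : ℕ} {k : α} (hk : k ∈ S) (hg : g (j + 1) = insert k (g j)) :
    gainOutside f S g (j + 1) = gainOutside f S g j := by
  have : g (j + 1) ⊆ S ∪ g j := hg ▸ insert_subset (mem_union_left _ hk) subset_union_right
  rw [gainOutside, sum_range_succ, if_pos this, add_zero, gainOutside]

theorem gainOutside_succ_of_notMem {j : ℕ} {k : α} (hkS : k ∉ S) (hkg : k ∉ g j)
    (hg : g (j + 1) = insert k (g j)) :
    gainOutside f S g (j + 1) = gainOutside f S g j + (f (g (j + 1)) - f (g j)) := by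
  have : ¬ g (j + 1) ⊆ S ∪ g j := by simp [hg, insert_subset_iff, hkS, hkg]
  rw [gainOutside, sum_range_succ, if_neg this, gainOutside]

theorem gainOutside_nonneg (hmono : Monotone f)
    (hstep : ∀ t < κ, IsGreedyStep f (g t) (g (t + 1))) {i : ℕ} (hi : i ≤ κ) :
    0 ≤ gainOutside f S g i :=
  sum_nonneg fun j hj ↦ by
    split_ifs
    · exact le_rfl
    · exact sub_nonneg.2 (hmono (hstep j ((mem_range.1 hj).trans_le hi)).subset)

theorem add_gainOutside_le (hmono : Monotone f)
    (hcurv : ∀ S R : Finset α, S ⊆ R → ∀ k, k ∉ R →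
      (1 - ξ) * (f (insert k S) - f S) ≤ f (insert k R) - f R)
    (hstep : ∀ t < κ, IsGreedyStep f (g t) (g (t + 1))) {i : ℕ} (hi : i ≤ κ) :
    f S + (1 - ξ) * gainOutside f S g i ≤ f (S ∪ g i) := by
  induction i with
  | zero => simpa using hmono subset_union_left
  | succ i ih =>
    obtain ⟨k, hkg, hg, -⟩ := hstep i hi
    by_cases hkS : k ∈ S
    · rw [gainOutside_succ_of_mem hkS hg, hg, union_insert, insert_eq_of_mem (mem_union_left _ hkS)]
      exact ih (by omega)
    · have hcurv_i := hcurv (g i) (S ∪ g i) subset_union_right k (by simp [hkS, hkg])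
      rw [gainOutside_succ_of_notMem hkS hkg hg, hg, union_insert]
      linarith [ih (by omega)]

theorem greedy_potential_le (hξ0 : 0 ≤ ξ) (hξ1 : ξ ≤ 1) (hγ0 : 0 ≤ γ) (hγ1 : γ ≤ 1)
    (hmono : Monotone f)
    (hcurv : ∀ S R : Finset α, S ⊆ R → ∀ k, k ∉ R →
      (1 - ξ) * (f (insert k S) - f S) ≤ f (insert k R) - f R)
    (hratio : ∀ S R : Finset α,
      γ * (f (S ∪ R) - f S) ≤ ∑ k ∈ R \ S, (f (insert k S) - f S))
    (hstep : ∀ t < κ, IsGreedyStep f (g t) (g (t + 1))) (hlt : f (g κ) < f S) :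
    f S - ξ * f (g κ) ≤ (1 - ξ) * f (g 0) + (f S - f (g 0)) * greedyFactor ξ γ κ #(S \ g 0) := by
  have hlt_S : ∀ i ≤ κ, f (g i) < f S := fun i hi ↦
    (hmono (monotoneOn_of_isGreedyStep hstep hi Set.self_mem_Iic hi)).trans_lt hlt
  have hΦ : ∀ i ≤ κ, 0 ≤ f S + (1 - ξ) * gainOutside f S g i - f (g i) := fun i hi ↦ by
    linarith [hlt_S i hi,
      mul_nonneg (sub_nonneg.2 hξ1) (gainOutside_nonneg (S := S) hmono hstep hi)]
  have h := potential_le_greedyFactor hξ0 hξ1 hγ0 hγ1 (κ := κ)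
    (Φ := fun i ↦ f S + (1 - ξ) * gainOutside f S g i - f (g i))
    (B := fun i ↦ f (g i) - gainOutside f S g i) (D := fun i ↦ #(S \ g i)) hΦ
    (fun i hi ↦ card_pos.2 (sdiff_nonempty.2 fun hS ↦ (hlt_S i hi).not_ge (hmono hS))) ?_
  · simp only [gainOutside_zero] at h
    linarith
  intro i hi
  obtain ⟨k, hkg, hg, -⟩ := hstep i hi
  refine ⟨f (g (i + 1)) - f (g i), sub_nonneg.2 (hmono (hstep i hi).subset), ?_, ?_⟩
  · calc γ * (f S + (1 - ξ) * gainOutside f S g i - f (g i)) ≤ γ * (f (S ∪ g i) - f (g i)) :=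
          mul_le_mul_of_nonneg_left
            (by linarith [add_gainOutside_le (S := S) hmono hcurv hstep hi.le]) hγ0
      _ ≤ _ := (hstep i hi).mul_le_card_mul (hratio _ _)
  by_cases hkS : k ∈ S
  · left
    refine ⟨?_, ?_, ?_⟩
    · rw [gainOutside_succ_of_mem hkS hg]; ring
    · rw [gainOutside_succ_of_mem hkS hg]; ring
    · rw [hg, sdiff_insert, card_erase_add_one (mem_sdiff.2 ⟨hkS, hkg⟩)]
  · right
    refine ⟨?_, ?_, ?_⟩
    · rw [gainOutside_succ_of_notMem hkS hkg hg]; ring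
    · rw [gainOutside_succ_of_notMem hkS hkg hg]; ring
    · rw [hg, sdiff_insert_of_notMem hkS]

end SetFunction

/-- Greedy guarantee from bounded curvature and submodularity ratio (Bian et al. 2017):
for a nonnegative monotone set function `f` with curvature `ξ ∈ (0,1]` and
submodularity ratio `γ ∈ (0,1]`, the greedy algorithm choosing `κ` elements, each
maximizing the marginal gain, returns `g κ` with
`f(g κ) ≥ (1/ξ)(1 − e^{−ξγ}) · max_{|S| ≤ κ} f(S)`. -/
theorem greedy_guarantee_curvature_submodularity_ratio {N : ℕ}
    (f : Finset (Fin N) → ℝ)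
    (hf0 : ∀ S, 0 ≤ f S)
    (hmono : ∀ S R : Finset (Fin N), S ⊆ R → f S ≤ f R)
    (ξ γ : ℝ) (hξ0 : 0 < ξ) (hξ1 : ξ ≤ 1) (hγ0 : 0 < γ) (hγ1 : γ ≤ 1)
    (hcurv : ∀ S R : Finset (Fin N), S ⊆ R → ∀ k, k ∉ R →
      (1 - ξ) * (f (insert k S) - f S) ≤ f (insert k R) - f R)
    (hratio : ∀ S R : Finset (Fin N),
      γ * (f (S ∪ R) - f S) ≤ ∑ k ∈ R \ S, (f (insert k S) - f S))
    (κ : ℕ) (g : ℕ → Finset (Fin N)) (hg0 : g 0 = ∅)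
    (hstep : ∀ t, t < κ → ∃ k, k ∉ g t ∧ g (t+1) = insert k (g t) ∧
      ∀ k', k' ∉ g t → f (insert k' (g t)) ≤ f (insert k (g t))) :
    ∀ S : Finset (Fin N), S.card ≤ κ →
      (1 / ξ) * (1 - Real.exp (-(ξ * γ))) * f S ≤ f (g κ) := by
  intro S hS
  have hmono' : Monotone f := fun S R h ↦ hmono S R h
  have hexp : 1 - ξ ≤ exp (-(ξ * γ)) := by
    linarith [add_one_le_exp (-(ξ * γ)), mul_le_of_le_one_right hξ0.le hγ1]
  suffices h : (1 - exp (-(ξ * γ))) * f S ≤ ξ * f (g κ) by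
    rwa [mul_assoc, one_div, inv_mul_le_iff₀ hξ0]
  rcases le_or_gt (f S) (f (g κ)) with hle | hlt
  · calc (1 - exp (-(ξ * γ))) * f S ≤ ξ * f S :=
          mul_le_mul_of_nonneg_right (by linarith) (hf0 S)
      _ ≤ ξ * f (g κ) := mul_le_mul_of_nonneg_left hle hξ0.le
  have hS_pos : 1 ≤ #S := card_pos.2 <| nonempty_iff_ne_empty.2 fun hS_empty ↦
    hlt.not_ge (hS_empty ▸ hmono' (empty_subset _))
  have h := greedy_potential_le hξ0.le hξ1 hγ0.le hγ1 hmono' hcurv hratio hstep hlt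
  rw [hg0, sdiff_empty] at h
  have hV := mul_le_mul_of_nonneg_left (greedyFactor_le_exp hξ0.le hξ1 hγ0.le hγ1 hS_pos hS)
    (sub_nonneg.2 (hmono' (empty_subset S)))
  linarith [mul_nonneg (sub_nonneg.2 hexp) (hf0 ∅)]
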